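/- arXiv:2407.15623 — 5 statements merged into one kernel-verified Lean document; each statement's English description precedes it below -/
import Mathlib

section
/- There is no unitary operator U on ℂ² ⊗ ℂ² such that for every unit vector φ ∈ ℂ², U(φ ⊗ e₀) = φ ⊗ φ, where e₀ = (1,0) is the first standard basis vector of ℂ² (the qubit state |0⟩). -/
/-- The qubit state `|0⟩ = (1,0)` in `ℂ²`. -/
noncomputable def e0 : EuclideanSpace ℂ (Fin 2) := EuclideanSpace.single 0 1

/-- The tensor product of two qubit states, realized concretely via the canonical
Hilbert-space isomorphism `ℂ² ⊗ ℂ² ≅ ℂ^(2×2)` (Kronecker product of coordinates). -/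
noncomputable def tmul2 (x y : EuclideanSpace ℂ (Fin 2)) :
    EuclideanSpace ℂ (Fin 2 × Fin 2) :=
  (WithLp.equiv 2 _).symm fun p => x p.1 * y p.2

/-!
A unitary preserves inner products, while `⟪φ ⊗ e₀, ψ ⊗ e₀⟫ = ⟪φ, ψ⟫` and
`⟪φ ⊗ φ, ψ ⊗ ψ⟫ = ⟪φ, ψ⟫²`. A cloner would therefore force `⟪φ, ψ⟫ ∈ {0, 1}` for all unit
vectors, which fails for `φ = e₀` and `ψ = (3/5, 4/5)`.
-/

open scoped InnerProductSpace

lemma inner_tmul2 (x y x' y' : EuclideanSpace ℂ (Fin 2)) :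
    ⟪tmul2 x y, tmul2 x' y'⟫_ℂ = ⟪x, x'⟫_ℂ * ⟪y, y'⟫_ℂ := by
  simp only [PiLp.inner_apply, tmul2, Fintype.sum_prod_type, Finset.sum_mul_sum]
  refine Finset.sum_congr rfl fun i _ => Finset.sum_congr rfl fun j _ => ?_
  simp only [WithLp.equiv_symm_apply, RCLike.inner_apply, map_mul]
  ring

lemma norm_e0 : ‖e0‖ = 1 := by simp [e0]

lemma inner_eq_sq_of_clones
    (U : EuclideanSpace ℂ (Fin 2 × Fin 2) →ₗᵢ[ℂ] EuclideanSpace ℂ (Fin 2 × Fin 2))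
    (hU : ∀ φ : EuclideanSpace ℂ (Fin 2), ‖φ‖ = 1 → U (tmul2 φ e0) = tmul2 φ φ)
    {φ ψ : EuclideanSpace ℂ (Fin 2)} (hφ : ‖φ‖ = 1) (hψ : ‖ψ‖ = 1) :
    ⟪φ, ψ⟫_ℂ = ⟪φ, ψ⟫_ℂ ^ 2 :=
  calc ⟪φ, ψ⟫_ℂ = ⟪tmul2 φ e0, tmul2 ψ e0⟫_ℂ := by
        rw [inner_tmul2, inner_self_eq_one_of_norm_eq_one norm_e0, mul_one]
    _ = ⟪tmul2 φ φ, tmul2 ψ ψ⟫_ℂ := by rw [← U.inner_map_map, hU φ hφ, hU ψ hψ]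
    _ = ⟪φ, ψ⟫_ℂ ^ 2 := by rw [inner_tmul2, sq]

/-- **No-cloning theorem (1WQC, single-qubit version).**
There is no unitary operator `U` on `ℂ² ⊗ ℂ²` such that `U (φ ⊗ e₀) = φ ⊗ φ`
for every unit vector `φ ∈ ℂ²`. -/
theorem no_cloning_1WQC_qubit :
    ¬ ∃ U : EuclideanSpace ℂ (Fin 2 × Fin 2) ≃ₗᵢ[ℂ] EuclideanSpace ℂ (Fin 2 × Fin 2),
      ∀ φ : EuclideanSpace ℂ (Fin 2), ‖φ‖ = 1 → U (tmul2 φ e0) = tmul2 φ φ := by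
  rintro ⟨U, hU⟩
  set ψ : EuclideanSpace ℂ (Fin 2) := !₂[3 / 5, 4 / 5]
  have hψ : ‖ψ‖ = 1 := by
    rw [EuclideanSpace.norm_eq, Real.sqrt_eq_one]
    norm_num [ψ]
  have he0ψ : ⟪e0, ψ⟫_ℂ = 3 / 5 := by simp [e0, ψ, EuclideanSpace.inner_single_left]
  have h := inner_eq_sq_of_clones U.toLinearIsometry hU norm_e0 hψ
  rw [he0ψ] at h
  norm_num at h
end

section
/- If a linear map U on ℂ² ⊗ ℂ² satisfies U(e₀ ⊗ e₀) = e₀ ⊗ e₀ and U(e₁ ⊗ e₀) = e₁ ⊗ e₁, then for every φ = a•e₀ + b•e₁ with a ≠ 0 and b ≠ 0 one has U(φ ⊗ e₀) ≠ φ ⊗ φ. -/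
/-- The qubit state `|1⟩ = (0,1)` in `ℂ²`. -/
noncomputable def e1 : EuclideanSpace ℂ (Fin 2) := EuclideanSpace.single 1 1

/-- **Linearity step of the single-qubit no-cloning proof.**
If a linear map `U` on `ℂ² ⊗ ℂ²` clones both basis states, i.e.
`U (e₀ ⊗ e₀) = e₀ ⊗ e₀` and `U (e₁ ⊗ e₀) = e₁ ⊗ e₁`, then for every
`φ = a • e₀ + b • e₁` with `a ≠ 0` and `b ≠ 0` one has `U (φ ⊗ e₀) ≠ φ ⊗ φ`. -/
theorem no_cloning_linearity_step
    (U : EuclideanSpace ℂ (Fin 2 × Fin 2) →ₗ[ℂ] EuclideanSpace ℂ (Fin 2 × Fin 2))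
    (h0 : U (tmul2 e0 e0) = tmul2 e0 e0)
    (h1 : U (tmul2 e1 e0) = tmul2 e1 e1)
    (a b : ℂ) (ha : a ≠ 0) (hb : b ≠ 0) :
    U (tmul2 (a • e0 + b • e1) e0) ≠ tmul2 (a • e0 + b • e1) (a • e0 + b • e1) := by
  have hlin : tmul2 (a • e0 + b • e1) e0 = a • tmul2 e0 e0 + b • tmul2 e1 e0 := by
    ext p
    simp [tmul2, e0, e1, EuclideanSpace.single_apply, add_mul, mul_assoc]
    split_ifs <;> simp
  intro h
  rw [hlin, map_add, map_smul, map_smul, h0, h1] at h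
  have h2 := congrArg (fun v => v ((0 : Fin 2), (1 : Fin 2))) h
  simp [tmul2, e0, e1, EuclideanSpace.single_apply] at h2
  rcases h2 with h2 | h2
  · exact ha h2
  · exact hb h2
end

section
/- Let H be a complex Hilbert space of dimension at least 2. There is no unitary operator U on H ⊗ H and no unit vector e ∈ H such that for every unit vector φ ∈ H there exists a real number α_φ with U(φ ⊗ e) = e^{iα_φ} • (φ ⊗ φ). -/
open scoped ComplexInnerProductSpace

/-- **No-cloning theorem (1WQC, general version).**
Let `H` be a complex Hilbert space of dimension at least 2 and let `T` be the
Hilbert-space tensor product `H ⊗ H`: a complex Hilbert space together with a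
bilinear map `tmul` (pure tensors) satisfying `⟪a ⊗ b, c ⊗ d⟫ = ⟪a, c⟫ * ⟪b, d⟫`,
whose pure tensors span a dense subspace.  There is no unitary operator `U` on
`H ⊗ H` and no unit vector `e ∈ H` such that for every unit vector `φ ∈ H` there
is a real number `α` with `U (φ ⊗ e) = e^{iα} • (φ ⊗ φ)`. -/
theorem no_cloning_1WQC
    (H : Type*) [NormedAddCommGroup H] [InnerProductSpace ℂ H] [CompleteSpace H]
    (hdim : 2 ≤ Module.rank ℂ H)
    (T : Type*) [NormedAddCommGroup T] [InnerProductSpace ℂ T] [CompleteSpace T]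
    (tmul : H →ₗ[ℂ] H →ₗ[ℂ] T)
    (htmul_inner : ∀ a b c d : H, ⟪tmul a b, tmul c d⟫ = ⟪a, c⟫ * ⟪b, d⟫)
    (htmul_dense :
      (Submodule.span ℂ (Set.range fun p : H × H => tmul p.1 p.2)).topologicalClosure
        = ⊤) :
    ¬ ∃ (U : T ≃ₗᵢ[ℂ] T) (e : H), ‖e‖ = 1 ∧
        ∀ φ : H, ‖φ‖ = 1 → ∃ α : ℝ,
          U (tmul φ e) = Complex.exp (α * Complex.I) • (tmul φ φ) := by
  rintro ⟨U, e, he, h⟩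
  -- find a unit vector orthogonal to e
  have hK : (ℂ ∙ e) ≠ ⊤ := by
    intro hT
    have h1 : Module.rank ℂ (ℂ ∙ e : Submodule ℂ H) ≤ 1 := by
      simpa using rank_span_le (R := ℂ) ({e} : Set H)
    rw [hT] at h1
    have := (rank_top ℂ H) ▸ h1
    exact absurd (hdim.trans this) (by norm_num)
  have hKbot : (ℂ ∙ e)ᗮ ≠ ⊥ := by
    intro hbot
    exact hK ((Submodule.orthogonal_eq_bot_iff (K := ℂ ∙ e)).mp hbot)
  obtain ⟨y0, hy0mem, hy0⟩ := Submodule.ne_bot_iff _ |>.mp hKbot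
  have hy0n : ‖y0‖ ≠ 0 := norm_ne_zero_iff.mpr hy0
  set y : H := (‖y0‖ : ℂ)⁻¹ • y0 with hy_def
  have hey : ⟪e, y⟫ = 0 := by
    have h0 : ⟪e, y0⟫ = 0 :=
      hy0mem e (Submodule.mem_span_singleton_self e)
    rw [hy_def, inner_smul_right, h0, mul_zero]
  have hyn : ‖y‖ = 1 := by
    rw [hy_def, norm_smul]
    simp [hy0n]
  -- the superposition
  set c : ℂ := ((Real.sqrt 2 : ℝ) : ℂ)⁻¹ with hc_def
  have hs2 : (0:ℝ) < Real.sqrt 2 := Real.sqrt_pos.mpr (by norm_num)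
  set ψ : H := c • (e + y) with hψ_def
  have hee : ⟪e, e⟫ = (1 : ℂ) := by
    rw [inner_self_eq_norm_sq_to_K, he]; norm_num
  have hyy : ⟪y, y⟫ = (1 : ℂ) := by
    rw [inner_self_eq_norm_sq_to_K, hyn]; norm_num
  have hye : ⟪y, e⟫ = 0 := by
    rw [← inner_conj_symm, hey, map_zero]
  have hψn : ‖ψ‖ = 1 := by
    have hn2 : ‖e + y‖ ^ 2 = 2 := by
      have := norm_add_sq (𝕜 := ℂ) e y
      rw [hey] at this
      simp only [map_zero, mul_zero, add_zero, zero_mul] at this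
      rw [this, he, hyn]; norm_num
    have hn : ‖e + y‖ = Real.sqrt 2 := by
      rw [← Real.sqrt_sq (norm_nonneg (e + y)), hn2]
    rw [hψ_def, norm_smul, hn, hc_def]
    simp [Complex.norm_real, abs_of_pos hs2]
  have heψ : ⟪e, ψ⟫ = c := by
    rw [hψ_def, inner_smul_right, inner_add_right, hee, hey]
    ring
  have hcabs : ‖c‖ = (Real.sqrt 2)⁻¹ := by
    rw [hc_def, norm_inv, Complex.norm_real, Real.norm_eq_abs, abs_of_pos hs2]
  obtain ⟨α, hα⟩ := h e he
  obtain ⟨β, hβ⟩ := h ψ hψn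
  have hU : ⟪U (tmul e e), U (tmul ψ e)⟫ = ⟪tmul e e, tmul ψ e⟫ :=
    U.inner_map_map _ _
  rw [hα, hβ, inner_smul_left, inner_smul_right, htmul_inner, htmul_inner,
    hee, heψ, mul_one] at hU
  -- take absolute values
  have habs := congrArg (‖·‖) hU
  simp only [norm_mul, Complex.norm_conj, Complex.norm_exp_ofReal_mul_I, one_mul] at habs
  rw [hcabs] at habs
  have h2 : Real.sqrt 2 ^ 2 = 2 := Real.sq_sqrt (by norm_num)
  rw [show (Real.sqrt 2)⁻¹ * (Real.sqrt 2)⁻¹ = 2⁻¹ by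
    rw [← mul_inv]; congr 1; nlinarith] at habs
  have : Real.sqrt 2 = 2 := by
    field_simp at habs
    linarith
  nlinarith
end

section
/- Let H be a complex Hilbert space of dimension at least 2 and H_C a complex Hilbert space. There is no unitary operator U on H ⊗ H ⊗ H_C, no unit vectors e ∈ H and f, g ∈ H_C, and no family of complex numbers c_φ with 0 < |c_φ| ≤ 1, such that for every unit vector φ ∈ H, applying the linear functional ⟨g|·⟩ to the third tensor factor of U(φ ⊗ e ⊗ f) yields c_φ • (φ ⊗ φ); i.e., (id ⊗ id ⊗ ⟨g|) U(φ ⊗ e ⊗ f) = c_φ • (φ ⊗ φ) is impossible for all unit φ. -/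
open scoped ComplexInnerProductSpace

/-- **No-cloning theorem for 2WQC (general version).**
Let `H` be a complex Hilbert space of dimension at least 2 and `H_C` a complex
Hilbert space (the ancilla).  Let `T2` be the Hilbert-space tensor product `H ⊗ H`
(with pure tensors `tmul a b` multiplying inner products and spanning a dense
subspace) and let `T3` be the Hilbert-space tensor product `(H ⊗ H) ⊗ H_C`
(with pure tensors `tmulC x c`, `x ∈ H ⊗ H`, `c ∈ H_C`, likewise).
There is no unitary operator `U` on `H ⊗ H ⊗ H_C`, no unit vectors `e ∈ H` and
`f, g ∈ H_C`, and no family of complex amplitudes `c φ` with `0 < |c φ| ≤ 1`, such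
that applying the partial projection `P = (id ⊗ id ⊗ ⟨g|)` (the continuous linear
map determined by `P (x ⊗ c) = ⟪g, c⟫ • x`) to `U (φ ⊗ e ⊗ f)` yields
`c φ • (φ ⊗ φ)` for every unit vector `φ ∈ H`. -/
theorem no_cloning_2WQC
    (H : Type*) [NormedAddCommGroup H] [InnerProductSpace ℂ H] [CompleteSpace H]
    (H_C : Type*) [NormedAddCommGroup H_C] [InnerProductSpace ℂ H_C]
    [CompleteSpace H_C]
    (hdim : 2 ≤ Module.rank ℂ H)
    (T2 : Type*) [NormedAddCommGroup T2] [InnerProductSpace ℂ T2] [CompleteSpace T2]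
    (tmul : H →ₗ[ℂ] H →ₗ[ℂ] T2)
    (htmul_inner : ∀ a b a' b' : H, ⟪tmul a b, tmul a' b'⟫ = ⟪a, a'⟫ * ⟪b, b'⟫)
    (htmul_dense :
      (Submodule.span ℂ (Set.range fun p : H × H => tmul p.1 p.2)).topologicalClosure
        = ⊤)
    (T3 : Type*) [NormedAddCommGroup T3] [InnerProductSpace ℂ T3] [CompleteSpace T3]
    (tmulC : T2 →ₗ[ℂ] H_C →ₗ[ℂ] T3)
    (htmulC_inner : ∀ (x x' : T2) (c c' : H_C),
      ⟪tmulC x c, tmulC x' c'⟫ = ⟪x, x'⟫ * ⟪c, c'⟫)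
    (htmulC_dense :
      (Submodule.span ℂ
        (Set.range fun p : T2 × H_C => tmulC p.1 p.2)).topologicalClosure = ⊤) :
    ¬ ∃ (U : T3 ≃ₗᵢ[ℂ] T3) (e : H) (f g : H_C) (c : H → ℂ) (P : T3 →L[ℂ] T2),
      ‖e‖ = 1 ∧ ‖f‖ = 1 ∧ ‖g‖ = 1 ∧
      (∀ (x : T2) (w : H_C), P (tmulC x w) = ⟪g, w⟫ • x) ∧
      (∀ φ : H, ‖φ‖ = 1 → 0 < ‖c φ‖ ∧ ‖c φ‖ ≤ 1) ∧
      (∀ φ : H, ‖φ‖ = 1 → P (U (tmulC (tmul φ e) f)) = c φ • tmul φ φ) := by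
  rintro ⟨U, e, f, g, c, P, he, hf, hg, hP, hc, hmain⟩
  -- obtain two orthonormal vectors a, b
  obtain ⟨v, hv⟩ := exists_linearIndependent_of_le_rank
    (by exact_mod_cast hdim : ((2:ℕ) : Cardinal) ≤ Module.rank ℂ H)
  rw [linearIndependent_fin2] at hv
  obtain ⟨hv1, hv0⟩ := hv
  set a : H := (‖v 1‖⁻¹ : ℂ) • v 1 with ha
  have hna : ‖a‖ = 1 := by
    rw [ha]; exact norm_smul_inv_norm hv1
  have haa : ⟪a, a⟫ = 1 := by
    rw [inner_self_eq_norm_sq_to_K, hna]; norm_num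
  set u : H := v 0 - ⟪a, v 0⟫ • a with hu
  have hu0 : u ≠ 0 := by
    intro h
    apply hv0 (⟪a, v 0⟫ * (‖v 1‖⁻¹ : ℂ))
    rw [mul_smul, ← ha]
    exact (sub_eq_zero.mp (hu ▸ h)).symm
  set b : H := (‖u‖⁻¹ : ℂ) • u with hb
  have hnb : ‖b‖ = 1 := by
    rw [hb]; exact norm_smul_inv_norm hu0
  have hbb : ⟪b, b⟫ = 1 := by
    rw [inner_self_eq_norm_sq_to_K, hnb]; norm_num
  have hau : ⟪a, u⟫ = 0 := by
    rw [hu, inner_sub_right, inner_smul_right, haa, mul_one, sub_self]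
  have hab : ⟪a, b⟫ = 0 := by
    rw [hb, inner_smul_right, hau, mul_zero]
  have hba : ⟪b, a⟫ = 0 := by
    rw [← inner_conj_symm, hab, map_zero]
  set s : ℂ := (((Real.sqrt 2)⁻¹ : ℝ) : ℂ) with hs
  have hs2 : (Real.sqrt 2) ≠ 0 := by positivity
  have hsne : s ≠ 0 := by
    simp [hs, Complex.ofReal_ne_zero, hs2]
  set χ : H := s • (a + b) with hχ
  have hnχ : ‖χ‖ = 1 := by
    have h2 : ‖a + b‖ = Real.sqrt 2 := by
      have h3 := norm_add_sq (𝕜 := ℂ) a b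
      rw [hab, hna, hnb] at h3
      simp only [map_zero, mul_zero, one_pow, add_zero, zero_add, mul_one] at h3
      have h4 : ‖a + b‖ ^ 2 = 2 := by rw [h3]; norm_num
      nlinarith [norm_nonneg (a + b), Real.sq_sqrt (by norm_num : (2:ℝ) ≥ 0),
        Real.sqrt_nonneg 2]
    rw [hχ, norm_smul, h2]
    have habs : |Real.sqrt 2| = Real.sqrt 2 := abs_of_nonneg (Real.sqrt_nonneg 2)
    simp [hs, habs, inv_mul_cancel₀ hs2]
  -- main equation for χ
  have key := hmain χ hnχ
  have hlin : tmulC (tmul χ e) f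
      = s • tmulC (tmul a e) f + s • tmulC (tmul b e) f := by
    rw [hχ]
    simp [map_add, map_smul, LinearMap.add_apply, LinearMap.smul_apply, smul_add]
  have hPU : P (U (tmulC (tmul χ e) f))
      = s • (c a • tmul a a) + s • (c b • tmul b b) := by
    rw [hlin]
    simp only [map_add, map_smul]
    rw [hmain a hna, hmain b hnb]
  rw [hPU] at key
  -- take inner product with tmul a b
  have hinner := congrArg (fun z => (⟪tmul a b, z⟫ : ℂ)) key
  simp only [inner_add_right, inner_smul_right] at hinner
  rw [htmul_inner a b a a, htmul_inner a b b b] at hinner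
  have hχexp : (⟪tmul a b, tmul χ χ⟫ : ℂ) = s ^ 2 := by
    rw [htmul_inner]
    rw [hχ, inner_smul_right, inner_smul_right, inner_add_right, inner_add_right,
      haa, hab, hba, hbb]
    ring
  rw [hχexp] at hinner
  rw [haa, hab, hba, hbb] at hinner
  have hcχ : c χ = 0 := by
    have : c χ * s ^ 2 = 0 := by linear_combination -hinner
    rcases mul_eq_zero.1 this with h | h
    · exact h
    · exact absurd h (pow_ne_zero 2 hsne)
  have := (hc χ hnχ).1
  rw [hcχ] at this
  simp at this
end

section
/- Let H be a complex Hilbert space with orthonormal basis (b_v)_{v ∈ B}, let φ = Σ_v φ_v • b_v ∈ H, let c ∈ ℂ with c ≠ 0, and let (d_v)_{v ∈ B} be complex coefficients. If c • (φ ⊗ φ) = Σ_v d_v • (b_v ⊗ b_v) in H ⊗ H, then φ_u · φ_v = 0 for all u ≠ v; in particular, at most one coordinate φ_v is nonzero. -/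
open scoped ComplexInnerProductSpace

/-!
Pairing the identity `c • (φ ⊗ φ) = Σ_w d_w • (b_w ⊗ b_w)` with `b_u ⊗ b_v` for `u ≠ v` gives
`c φ_u φ_v` on the left, since inner products of pure tensors factor, and `0` on the right,
since `b_u ⊗ b_v` is orthogonal to every diagonal tensor `b_w ⊗ b_w`.
-/

section InnerHasSum

variable {𝕜 E ι : Type*} [RCLike 𝕜] [NormedAddCommGroup E] [InnerProductSpace 𝕜 E]
  {f : ι → 𝕜} {e : ι → E} {x : E}

theorem HasSum.inner_smul_right (hx : HasSum (fun i => f i • e i) x) (y : E) :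
    HasSum (fun i => f i * inner 𝕜 y (e i)) (inner 𝕜 y x) := by
  simpa only [innerSL_apply_apply, _root_.inner_smul_right] using (innerSL 𝕜 y).hasSum hx

theorem HasSum.inner_eq_zero (hx : HasSum (fun i => f i • e i) x) {y : E}
    (hy : ∀ i, inner 𝕜 y (e i) = 0) : inner 𝕜 y x = 0 :=
  (hx.inner_smul_right y).unique (by simpa only [hy, mul_zero] using hasSum_zero)

theorem Orthonormal.inner_left_eq_of_hasSum (he : Orthonormal 𝕜 e)
    (hx : HasSum (fun i => f i • e i) x) (j : ι) : inner 𝕜 (e j) x = f j := by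
  refine (hx.inner_smul_right (e j)).unique ?_
  convert hasSum_single (f := fun i => f i * inner 𝕜 (e j) (e i)) j
    fun i hij => by rw [he.inner_eq_zero hij.symm, mul_zero]
  rw [inner_self_eq_one_of_norm_eq_one (he.norm_eq_one j), mul_one]

end InnerHasSum

theorem no_cloning_coefficient_comparison_general
    (H : Type*) [NormedAddCommGroup H] [InnerProductSpace ℂ H]
    {B : Type*} (b : HilbertBasis B ℂ H)
    (T2 : Type*) [NormedAddCommGroup T2] [InnerProductSpace ℂ T2]
    (tmul : H →ₗ[ℂ] H →ₗ[ℂ] T2)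
    (htmul_inner : ∀ x y x' y' : H, ⟪tmul x y, tmul x' y'⟫ = ⟪x, x'⟫ * ⟪y, y'⟫)
    (φ : H) (φv : B → ℂ) (hφ : HasSum (fun v => φv v • (b v : H)) φ)
    (c : ℂ) (hc : c ≠ 0) (d : B → ℂ)
    (hd : HasSum (fun v => d v • tmul (b v) (b v)) (c • tmul φ φ)) :
    (∀ u v : B, u ≠ v → φv u * φv v = 0) ∧
      ∀ u v : B, φv u ≠ 0 → φv v ≠ 0 → u = v := by
  have hcoef := b.orthonormal.inner_left_eq_of_hasSum hφ
  have hoff : ∀ u v : B, u ≠ v → φv u * φv v = 0 := by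
    intro u v huv
    have hdiag : ∀ w, ⟪tmul (b u) (b v), tmul (b w) (b w)⟫ = 0 := by
      intro w
      rw [htmul_inner]
      rcases eq_or_ne u w with rfl | huw
      · rw [b.orthonormal.inner_eq_zero huv.symm, mul_zero]
      · rw [b.orthonormal.inner_eq_zero huw, zero_mul]
    have hpair := hd.inner_eq_zero hdiag
    rw [inner_smul_right, htmul_inner, hcoef, hcoef] at hpair
    exact (mul_eq_zero.mp hpair).resolve_left hc
  exact ⟨hoff, fun u v hu hv => by_contra fun huv => mul_ne_zero hu hv (hoff u v huv)⟩

/-- **Coefficient-comparison lemma for the no-cloning proofs.**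
Let `H` be a complex Hilbert space with orthonormal (Hilbert) basis `(b v)_{v ∈ B}`
and let `T2` be the Hilbert-space tensor product `H ⊗ H` (with pure tensors
`tmul x y` multiplying inner products and spanning a dense subspace), so that
`(b u ⊗ b v)` is an orthonormal basis of `H ⊗ H`.  Let `φ = Σ_v φv v • b v ∈ H`,
let `c ≠ 0`, and suppose `c • (φ ⊗ φ) = Σ_v d v • (b v ⊗ b v)` in `H ⊗ H`.
Then `φv u * φv v = 0` for all `u ≠ v`; in particular at most one coordinate
`φv v` is nonzero. -/
theorem no_cloning_coefficient_comparison
    (H : Type*) [NormedAddCommGroup H] [InnerProductSpace ℂ H] [CompleteSpace H]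
    {B : Type*} (b : HilbertBasis B ℂ H)
    (T2 : Type*) [NormedAddCommGroup T2] [InnerProductSpace ℂ T2] [CompleteSpace T2]
    (tmul : H →ₗ[ℂ] H →ₗ[ℂ] T2)
    (htmul_inner : ∀ x y x' y' : H, ⟪tmul x y, tmul x' y'⟫ = ⟪x, x'⟫ * ⟪y, y'⟫)
    (htmul_dense :
      (Submodule.span ℂ (Set.range fun p : H × H => tmul p.1 p.2)).topologicalClosure
        = ⊤)
    (φ : H) (φv : B → ℂ) (hφ : HasSum (fun v => φv v • (b v : H)) φ)
    (c : ℂ) (hc : c ≠ 0) (d : B → ℂ)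
    (hd : HasSum (fun v => d v • tmul (b v) (b v)) (c • tmul φ φ)) :
    (∀ u v : B, u ≠ v → φv u * φv v = 0) ∧
      ∀ u v : B, φv u ≠ 0 → φv v ≠ 0 → u = v :=
  no_cloning_coefficient_comparison_general H b T2 tmul htmul_inner φ φv hφ c hc d hd
end
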